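/- arXiv:0904.2494 — 3 statements merged into one kernel-verified Lean document; each statement's English description precedes it below -/
import Mathlib

section
/- Let δ > 0, β₀ > 0, τ > 0 and β₁ ≥ 0 with β₀β₁ < δ. Then the function λ ↦ Δ(λ,τ) = λ + δ + β₀β₁ − (2β₀β₁/τ)∫_{−τ}^{0} e^{λs} ds, restricted to real λ, is strictly increasing, tends to −∞ as λ → −∞ and to +∞ as λ → +∞, and hence has a unique real zero λ₀; moreover Δ(0,τ) = δ − β₀β₁ > 0, so λ₀ < 0. -/
/-- The characteristic function `Δ(λ, τ)` restricted to real `λ`: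
`Δ(λ,τ) = λ + δ + β₀β₁ − (2β₀β₁/τ)∫_{−τ}^{0} e^{λ s} ds`. -/
noncomputable def charFnR (δ β₀ β₁ τ lam : ℝ) : ℝ :=
  lam + δ + β₀ * β₁ - (2 * β₀ * β₁ / τ) * ∫ s in (-τ)..(0 : ℝ), Real.exp (lam * s)

/-! For `β₀β₁ ≥ 0` the delay term `λ ↦ −(2β₀β₁/τ)∫_{−τ}^0 e^{λs} ds` is nondecreasing, since
`e^{λs}` decreases in `λ` for `s ≤ 0`. Hence `Δ(·,τ)` is the identity plus a monotone function,
which makes it strictly increasing and forces `Δ(λ) ≤ λ + Δ(0)` for `λ ≤ 0` and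
`Δ(λ) ≥ λ + Δ(0)` for `λ ≥ 0`. Being continuous, it is then a bijection of `ℝ`, and its zero lies
left of `0` because `Δ(0,τ) = δ − β₀β₁ > 0`. -/

open Filter Real

section IdAddMonotone

variable {f : ℝ → ℝ}

lemma strictMono_of_monotone_sub_id (hf : Monotone fun x => f x - x) : StrictMono f := by
  simpa using strictMono_id.add_monotone hf

lemma tendsto_atTop_of_monotone_sub_id (hf : Monotone fun x => f x - x) :
    Tendsto f atTop atTop := by
  have h := tendsto_atTop_add_left_of_le' atTop (f 0 - 0)
    ((eventually_ge_atTop 0).mono fun _ hx => hf hx) tendsto_id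
  simpa using h

lemma tendsto_atBot_of_monotone_sub_id (hf : Monotone fun x => f x - x) :
    Tendsto f atBot atBot := by
  have h := tendsto_atBot_add_left_of_ge' atBot (f 0 - 0)
    ((eventually_le_atBot 0).mono fun _ hx => hf hx) tendsto_id
  simpa using h

end IdAddMonotone

section ExpIntegral

variable {a b : ℝ}

lemma antitone_integral_exp_mul (hab : a ≤ b) (hb : b ≤ 0) :
    Antitone fun lam : ℝ => ∫ s in a..b, exp (lam * s) := by
  intro lam μ hlam
  refine intervalIntegral.integral_mono_on hab ((by fun_prop : Continuous _).intervalIntegrable _ _)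
    ((by fun_prop : Continuous _).intervalIntegrable _ _) fun s hs => ?_
  exact exp_le_exp.mpr (mul_le_mul_of_nonpos_right hlam (hs.2.trans hb))

lemma continuous_integral_exp_mul (a b : ℝ) :
    Continuous fun lam : ℝ => ∫ s in a..b, exp (lam * s) :=
  intervalIntegral.continuous_parametric_intervalIntegral_of_continuous' (by fun_prop) a b

end ExpIntegral

section CharFn

variable {δ β₀ β₁ τ : ℝ}

lemma monotone_charFnR_sub_id (hτ : 0 < τ) (hβ : 0 ≤ β₀ * β₁) :
    Monotone fun lam => charFnR δ β₀ β₁ τ lam - lam := by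
  have hc : 0 ≤ 2 * β₀ * β₁ / τ := by rw [mul_assoc]; positivity
  have hI := (antitone_integral_exp_mul (neg_nonpos.mpr hτ.le) le_rfl).const_mul hc
  intro x y hxy
  simp only [charFnR]
  linarith [hI hxy]

lemma continuous_charFnR (δ β₀ β₁ τ : ℝ) : Continuous (charFnR δ β₀ β₁ τ) := by
  unfold charFnR
  exact (by fun_prop : Continuous fun lam : ℝ => lam + δ + β₀ * β₁).sub
    (continuous_const.mul (continuous_integral_exp_mul _ _))

lemma charFnR_zero (δ β₀ β₁ : ℝ) (hτ : τ ≠ 0) : charFnR δ β₀ β₁ τ 0 = δ - β₀ * β₁ := by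
  simp only [charFnR, zero_mul, exp_zero, intervalIntegral.integral_const, sub_neg_eq_add,
    zero_add, smul_eq_mul, mul_one]
  field_simp
  ring

end CharFn

theorem charFnR_strictMono_unique_negative_zero_general
    (δ β₀ β₁ τ : ℝ) (hβ₀ : 0 < β₀) (hτ : 0 < τ)
    (hβ₁ : 0 ≤ β₁) (hlt : β₀ * β₁ < δ) :
    StrictMono (charFnR δ β₀ β₁ τ) ∧
    Filter.Tendsto (charFnR δ β₀ β₁ τ) Filter.atBot Filter.atBot ∧
    Filter.Tendsto (charFnR δ β₀ β₁ τ) Filter.atTop Filter.atTop ∧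
    (∃! lam₀ : ℝ, charFnR δ β₀ β₁ τ lam₀ = 0) ∧
    charFnR δ β₀ β₁ τ 0 = δ - β₀ * β₁ ∧ 0 < charFnR δ β₀ β₁ τ 0 ∧
    (∀ lam₀ : ℝ, charFnR δ β₀ β₁ τ lam₀ = 0 → lam₀ < 0) := by
  have hsub := monotone_charFnR_sub_id (δ := δ) hτ (mul_nonneg hβ₀.le hβ₁)
  have hmono := strictMono_of_monotone_sub_id hsub
  have hbot := tendsto_atBot_of_monotone_sub_id hsub
  have htop := tendsto_atTop_of_monotone_sub_id hsub
  have hval := charFnR_zero δ β₀ β₁ hτ.ne'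
  have hpos : 0 < charFnR δ β₀ β₁ τ 0 := hval ▸ sub_pos.mpr hlt
  obtain ⟨lam₀, hlam₀⟩ := (continuous_charFnR δ β₀ β₁ τ).surjective htop hbot 0
  refine ⟨hmono, hbot, htop, ⟨lam₀, hlam₀, fun y hy => hmono.injective (hy.trans hlam₀.symm)⟩,
    hval, hpos, fun l hl => ?_⟩
  exact hmono.lt_iff_lt.mp (hl ▸ hpos)

/-- for `β₁ ≥ 0` with `β₀ β₁ < δ`, the real characteristic function is strictly
increasing, tends to `−∞` at `−∞` and `+∞` at `+∞`, has a unique real zero `λ₀`;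
moreover `Δ(0,τ) = δ − β₀β₁ > 0` and `λ₀ < 0`. -/
theorem charFnR_strictMono_unique_negative_zero
    (δ β₀ β₁ τ : ℝ) (hδ : 0 < δ) (hβ₀ : 0 < β₀) (hτ : 0 < τ)
    (hβ₁ : 0 ≤ β₁) (hlt : β₀ * β₁ < δ) :
    StrictMono (charFnR δ β₀ β₁ τ) ∧
    Filter.Tendsto (charFnR δ β₀ β₁ τ) Filter.atBot Filter.atBot ∧
    Filter.Tendsto (charFnR δ β₀ β₁ τ) Filter.atTop Filter.atTop ∧
    (∃! lam₀ : ℝ, charFnR δ β₀ β₁ τ lam₀ = 0) ∧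
    charFnR δ β₀ β₁ τ 0 = δ - β₀ * β₁ ∧ 0 < charFnR δ β₀ β₁ τ 0 ∧
    (∀ lam₀ : ℝ, charFnR δ β₀ β₁ τ lam₀ = 0 → lam₀ < 0) :=
  charFnR_strictMono_unique_negative_zero_general δ β₀ β₁ τ hβ₀ hτ hβ₁ hlt
end

section
/- There exists a smallest x₀ > 0 such that x₀ = tan(x₀) and sin(x₀)/x₀ > 0; this x₀ lies in the interval (2π, 5π/2), and for every x ≥ π one has sin(x)/x ≤ sin(x₀)/x₀. -/
open Real Set

lemma cos_pos_Ico {x : ℝ} (hx : x ∈ Set.Ico (2*π) (5*π/2)) : 0 < Real.cos x := by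
  rw [← Real.cos_sub_two_pi]
  apply Real.cos_pos_of_mem_Ioo
  constructor
  · nlinarith [Real.pi_pos, hx.1]
  · nlinarith [Real.pi_pos, hx.2]

lemma fmono : StrictMonoOn (fun x => Real.tan x - x) (Set.Ico (2*π) (5*π/2)) := by
  apply strictMonoOn_of_deriv_pos (convex_Ico _ _)
  · exact (Real.continuousOn_tan.mono (fun x hx => (cos_pos_Ico hx).ne')).sub continuousOn_id
  · intro x hx
    rw [interior_Ico] at hx
    have hc : 0 < Real.cos x := cos_pos_Ico ⟨hx.1.le, hx.2⟩
    have hs : 0 < Real.sin x := by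
      rw [← Real.sin_sub_two_pi]
      apply Real.sin_pos_of_pos_of_lt_pi
      · nlinarith [Real.pi_pos, hx.1]
      · nlinarith [Real.pi_pos, hx.2]
    have hd : HasDerivAt (fun x => Real.tan x - x) (1 / Real.cos x ^ 2 - 1) x :=
      (Real.hasDerivAt_tan hc.ne').sub (hasDerivAt_id x)
    rw [hd.deriv]
    have h1 : Real.cos x ^ 2 < 1 := by nlinarith [Real.sin_sq_add_cos_sq x]
    have : 1 < 1 / Real.cos x ^ 2 := by rw [lt_div_iff₀ (by positivity)]; linarith
    linarith

lemma exists_x0 : ∃ x₀ ∈ Set.Ioo (2*π) (2*π + 1.5), Real.tan x₀ = x₀ := by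
  have hpi3 : (3:ℝ) < π := by linarith [Real.pi_gt_d6]
  have hpi4 : π < 3.15 := by linarith [Real.pi_lt_d2]
  have h15 : (1.5:ℝ) < π/2 := by linarith
  have hsub : Set.Icc (2*π) (2*π+1.5) ⊆ Set.Ico (2*π) (5*π/2) := fun x hx =>
    ⟨hx.1, by nlinarith [hx.2]⟩
  have hcont : ContinuousOn (fun x => Real.tan x - x) (Set.Icc (2*π) (2*π+1.5)) :=
    ((Real.continuousOn_tan.mono (fun x hx => (cos_pos_Ico (hsub hx)).ne')).sub
      continuousOn_id)
  -- value at 2π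
  have htan2pi : Real.tan (2*π) = 0 := by
    have := Real.tan_nat_mul_pi 2
    simpa using this
  -- value at 2π + 1.5
  have hc15 : 0 < Real.cos 1.5 := Real.cos_pos_of_mem_Ioo ⟨by linarith, h15⟩
  have hcub : Real.cos 1.5 < 0.075 := by
    have h1 : Real.cos 1.5 = Real.sin (π/2 - 1.5) := (Real.sin_pi_div_two_sub 1.5).symm
    have h2 : Real.sin (π/2 - 1.5) < π/2 - 1.5 := Real.sin_lt (by linarith)
    linarith
  have hslb : (0.99:ℝ) < Real.sin 1.5 := by
    have h1 : Real.sin 1.5 = Real.cos (π/2 - 1.5) := by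
      rw [← Real.sin_pi_div_two_sub]; ring_nf
    have h2 : 1 - (π/2 - 1.5)^2/2 < Real.cos (π/2 - 1.5) :=
      Real.one_sub_sq_div_two_lt_cos (by intro h; nlinarith)
    nlinarith
  have htana : 2*π + 1.5 < Real.tan (2*π + 1.5) := by
    have hper : Real.tan (2*π + 1.5) = Real.tan 1.5 := by
      rw [Real.tan_eq_sin_div_cos]
      rw [show (2*π + 1.5 : ℝ) = 1.5 + 2*π by ring, Real.sin_add_two_pi, Real.cos_add_two_pi,
        ← Real.tan_eq_sin_div_cos]
    rw [hper, Real.tan_eq_sin_div_cos]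
    rw [lt_div_iff₀ hc15]
    nlinarith
  have h0mem : (0:ℝ) ∈ Set.Ioo (Real.tan (2*π) - 2*π) (Real.tan (2*π+1.5) - (2*π+1.5)) := by
    constructor
    · rw [htan2pi]; linarith [Real.pi_pos]
    · linarith
  obtain ⟨x₀, hx₀, hfx⟩ := intermediate_value_Ioo (by linarith [Real.pi_pos]) hcont h0mem
  refine ⟨x₀, hx₀, ?_⟩
  have : Real.tan x₀ - x₀ = 0 := hfx
  linarith

lemma gderiv {x : ℝ} (hx : x ≠ 0) :
    HasDerivAt (fun y => Real.sin y / y) ((Real.cos x * x - Real.sin x * 1) / x ^ 2) x :=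
  (Real.hasDerivAt_sin x).div (hasDerivAt_id x) hx

/-- there is a smallest `x₀ > 0` with `x₀ = tan x₀` and `sin x₀ / x₀ > 0`;
it lies in `(2π, 5π/2)`, and `sin x / x ≤ sin x₀ / x₀` for all `x ≥ π`. -/
theorem exists_smallest_tan_fixed_point :
    ∃ x₀ : ℝ,
      (0 < x₀ ∧ x₀ = Real.tan x₀ ∧ 0 < Real.sin x₀ / x₀) ∧
      (∀ x : ℝ, 0 < x → x = Real.tan x → 0 < Real.sin x / x → x₀ ≤ x) ∧
      x₀ ∈ Set.Ioo (2 * Real.pi) (5 * Real.pi / 2) ∧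
      (∀ x : ℝ, Real.pi ≤ x → Real.sin x / x ≤ Real.sin x₀ / x₀) := by
  obtain ⟨x₀, hx₀mem, hfix⟩ := exists_x0
  have hpi3 : (3:ℝ) < π := by linarith [Real.pi_gt_d6]
  have hpi4 : π < 3.15 := by linarith [Real.pi_lt_d2]
  have hx₀Ioo : x₀ ∈ Set.Ioo (2*π) (5*π/2) := ⟨hx₀mem.1, by nlinarith [hx₀mem.2]⟩
  have hx₀pos : 0 < x₀ := by nlinarith [hx₀Ioo.1]
  have hsin₀ : 0 < Real.sin x₀ := by
    rw [← Real.sin_sub_two_pi]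
    apply Real.sin_pos_of_pos_of_lt_pi
    · nlinarith [hx₀Ioo.1]
    · nlinarith [hx₀Ioo.2]
  have hgpos : 0 < Real.sin x₀ / x₀ := div_pos hsin₀ hx₀pos
  -- tan x < x for x in (2π, x₀), tan x > x for x in (x₀, 5π/2)
  have hlt : ∀ x ∈ Set.Ioo (2*π) x₀, Real.tan x < x := by
    intro x hx
    have := fmono ⟨hx.1.le, by linarith [hx₀Ioo.2, hx.2]⟩ ⟨hx₀Ioo.1.le, hx₀Ioo.2⟩ hx.2
    simp only at this
    rw [hfix] at this; linarith
  have hgt : ∀ x ∈ Set.Ioo x₀ (5*π/2), x < Real.tan x := by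
    intro x hx
    have := fmono ⟨hx₀Ioo.1.le, hx₀Ioo.2⟩ ⟨by linarith [hx₀Ioo.1, hx.1], hx.2⟩ hx.1
    simp only at this
    rw [hfix] at this; linarith
  -- monotone parts of sin x / x
  have hcontg : ∀ s : Set ℝ, (∀ x ∈ s, x ≠ 0) → ContinuousOn (fun y => Real.sin y / y) s :=
    fun s hs => Real.continuous_sin.continuousOn.div continuousOn_id hs
  have gmono : StrictMonoOn (fun y => Real.sin y / y) (Set.Icc (2*π) x₀) := by
    apply strictMonoOn_of_deriv_pos (convex_Icc _ _)
    · exact hcontg _ (fun x hx => by nlinarith [hx.1])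
    · intro x hx
      rw [interior_Icc] at hx
      have hxpos : 0 < x := by nlinarith [hx.1]
      rw [(gderiv hxpos.ne').deriv]
      have hc : 0 < Real.cos x := cos_pos_Ico ⟨hx.1.le, by linarith [hx₀Ioo.2, hx.2]⟩
      have ht := hlt x hx
      rw [Real.tan_eq_sin_div_cos, div_lt_iff₀ hc] at ht
      have : 0 < Real.cos x * x - Real.sin x * 1 := by nlinarith
      positivity
  have ganti : StrictAntiOn (fun y => Real.sin y / y) (Set.Icc x₀ (5*π/2)) := by
    apply strictAntiOn_of_deriv_neg (convex_Icc _ _)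
    · exact hcontg _ (fun x hx => by nlinarith [hx.1])
    · intro x hx
      rw [interior_Icc] at hx
      have hxpos : 0 < x := by nlinarith [hx.1]
      rw [(gderiv hxpos.ne').deriv]
      have hc : 0 < Real.cos x := cos_pos_Ico ⟨by linarith [hx₀Ioo.1, hx.1], hx.2⟩
      have ht := hgt x hx
      rw [Real.tan_eq_sin_div_cos, lt_div_iff₀ hc] at ht
      have hnum : Real.cos x * x - Real.sin x * 1 < 0 := by nlinarith
      apply div_neg_of_neg_of_pos hnum (by positivity)
  have hsinle : ∀ y : ℝ, π ≤ y → y ≤ 2*π → Real.sin y ≤ 0 := by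
    intro y hy1 hy2
    have h := Real.sin_nonneg_of_nonneg_of_le_pi (x := y - π) (by linarith) (by linarith)
    rw [Real.sin_sub_pi] at h
    linarith
  refine ⟨x₀, ⟨hx₀pos, hfix.symm, hgpos⟩, ?_, hx₀Ioo, ?_⟩
  · -- minimality
    intro x hxpos hxfix hxdiv
    by_contra hcon
    push_neg at hcon
    have hsx : 0 < Real.sin x := by
      by_contra hs
      push_neg at hs
      have : Real.sin x / x ≤ 0 := div_nonpos_of_nonpos_of_nonneg hs hxpos.le
      linarith
    rcases le_or_gt x (2*π) with h2 | h2
    · -- x ≤ 2π: must have x < π, cos x > 0, x < π/2, contradiction with lt_tan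
      have hxltpi : x < π := by
        by_contra hge
        push_neg at hge
        linarith [hsinle x hge h2]
      have hcpos : 0 < Real.cos x := by
        by_contra hc
        push_neg at hc
        have : Real.tan x ≤ 0 := by
          rw [Real.tan_eq_sin_div_cos]
          exact div_nonpos_of_nonneg_of_nonpos hsx.le hc
        linarith [hxfix ▸ this]
      have hxlt2 : x < π/2 := by
        by_contra hge
        push_neg at hge
        have := Real.cos_nonpos_of_pi_div_two_le_of_le hge (by linarith)
        linarith
      have := Real.lt_tan hxpos hxlt2
      rw [← hxfix] at this
      exact lt_irrefl x this
    · -- 2π < x < x₀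
      have := hlt x ⟨h2, hcon⟩
      rw [← hxfix] at this
      exact lt_irrefl x this
  · -- maximality
    intro x hxpi
    have hxpos : 0 < x := by linarith
    rcases le_or_gt x (2*π) with h1 | h1
    · have hsx : Real.sin x ≤ 0 := hsinle x hxpi h1
      calc Real.sin x / x ≤ 0 := div_nonpos_of_nonpos_of_nonneg hsx hxpos.le
        _ ≤ Real.sin x₀ / x₀ := hgpos.le
    · rcases le_or_gt x x₀ with h2 | h2
      · exact gmono.monotoneOn ⟨h1.le, h2⟩ ⟨hx₀Ioo.1.le, le_refl _⟩ h2
      · rcases le_or_gt x (5*π/2) with h3 | h3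
        · exact (ganti.antitoneOn ⟨le_refl _, hx₀Ioo.2.le⟩ ⟨h2.le, h3⟩ h2.le)
        · have hend : Real.sin (5*π/2) / (5*π/2) ≤ Real.sin x₀ / x₀ :=
            ganti.antitoneOn ⟨le_refl _, hx₀Ioo.2.le⟩ ⟨hx₀Ioo.2.le, le_refl _⟩ hx₀Ioo.2.le
          have hs52 : Real.sin (5*π/2) = 1 := by
            rw [show (5*π/2 : ℝ) = π/2 + 2*π by ring, Real.sin_add_two_pi, Real.sin_pi_div_two]
          calc Real.sin x / x ≤ 1 / x := by
                gcongr
                exact Real.sin_le_one x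
            _ ≤ 1 / (5*π/2) := by
                apply one_div_le_one_div_of_le (by positivity) h3.le
            _ = Real.sin (5*π/2) / (5*π/2) := by rw [hs52]
            _ ≤ _ := hend
end

section
/- Let δ > 0, β₀ > 0 and β₁ < −δ/(β₀(1 − 2h(x₀))). Then h(x₀) < (δ + β₀β₁)/(2β₀β₁) < 1/2, and the equation sin(x)/x = (δ + β₀β₁)/(2β₀β₁) has a unique solution x_c among all x > 0; moreover x_c ∈ (0, π). -/
/-!
On `(0, π]` the function `h` falls strictly from `1` to `0`, because `h' = g / x²` with
`g x = x cos x - sin x` and `g' x = -x sin x < 0` there. On `[π, ∞)` it never exceeds `h x₀`: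
it is `≤ 0` on `[π, 2π]`, it is `≤ 1/x < h(5π/2) ≤ h x₀` beyond `3π`, and on `[2π, 3π]` the only
critical point is the zero of the decreasing `g`, which is `x₀` since `x = tan x ↔ g x = 0`.
Hence every level `c ∈ (h x₀, 1/2)` is attained exactly once, and inside `(0, π)`; the bounds on
the ratio are elementary algebra once `0 < h x₀ < 1/2`.
-/

open Real Set

/-- `h(x) = sin(x)/x`. -/
noncomputable def hfun (x : ℝ) : ℝ := Real.sin x / x

/-- `x₀`, the smallest `x > 0` with `x = tan x` and `h(x) > 0` (numerically `x₀ ≈ 7.725`). -/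
noncomputable def xZero : ℝ := sInf {x : ℝ | 0 < x ∧ x = Real.tan x ∧ 0 < hfun x}

lemma threshold_mem_Ioo {a δ β₀ β₁ : ℝ} (ha : a < 1 / 2) (hδ : 0 < δ) (hβ₀ : 0 < β₀)
    (hβ₁ : β₁ < -δ / (β₀ * (1 - 2 * a))) :
    a < (δ + β₀ * β₁) / (2 * β₀ * β₁) ∧ (δ + β₀ * β₁) / (2 * β₀ * β₁) < 1 / 2 := by
  have hden : 0 < β₀ * (1 - 2 * a) := mul_pos hβ₀ (by linarith)
  have hβ₁neg : β₁ < 0 := hβ₁.trans (div_neg_of_neg_of_pos (neg_neg_of_pos hδ) hden)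
  have hmul : β₁ * (β₀ * (1 - 2 * a)) < -δ := (lt_div_iff₀ hden).mp hβ₁
  have hprod : 2 * β₀ * β₁ < 0 := by nlinarith
  constructor
  · rw [lt_div_iff_of_neg hprod]
    linarith
  · rw [div_lt_iff_of_neg hprod]
    linarith

lemma sin_nonpos_of_mem_Icc_pi_two_pi {x : ℝ} (hx : x ∈ Icc π (2 * π)) : sin x ≤ 0 := by
  rw [← sin_sub_two_pi]
  exact sin_nonpos_of_nonpos_of_neg_pi_le (by linarith [hx.2]) (by linarith [hx.1])

lemma sin_pos_of_mem_Ioo_two_pi_three_pi {x : ℝ} (hx : x ∈ Ioo (2 * π) (3 * π)) : 0 < sin x := by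
  rw [← sin_sub_two_pi]
  exact sin_pos_of_pos_of_lt_pi (by linarith [hx.1]) (by linarith [hx.2])

lemma hfun_le_inv {x : ℝ} (hx : 0 < x) : hfun x ≤ x⁻¹ := by
  rw [hfun, div_eq_mul_inv]
  exact mul_le_of_le_one_left (inv_pos.mpr hx).le (sin_le_one x)

noncomputable def gfun (x : ℝ) : ℝ := x * cos x - sin x

lemma hasDerivAt_gfun (x : ℝ) : HasDerivAt gfun (-(x * sin x)) x := by
  have h : HasDerivAt gfun (1 * cos x + x * -sin x - cos x) x :=
    ((hasDerivAt_id x).mul (hasDerivAt_cos x)).sub (hasDerivAt_sin x)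
  convert h using 1
  ring

lemma continuous_gfun : Continuous gfun := by
  unfold gfun
  fun_prop

lemma gfun_strictAntiOn {a b : ℝ} (hpos : ∀ x ∈ Ioo a b, 0 < x * sin x) :
    StrictAntiOn gfun (Icc a b) := by
  refine strictAntiOn_of_deriv_neg (convex_Icc a b) continuous_gfun.continuousOn fun x hx => ?_
  rw [interior_Icc] at hx
  rw [(hasDerivAt_gfun x).deriv, neg_lt_zero]
  exact hpos x hx

lemma gfun_strictAntiOn_Icc_zero_pi : StrictAntiOn gfun (Icc 0 π) :=
  gfun_strictAntiOn fun _ hx => mul_pos hx.1 (sin_pos_of_pos_of_lt_pi hx.1 hx.2)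

lemma gfun_strictAntiOn_Icc_two_pi_three_pi : StrictAntiOn gfun (Icc (2 * π) (3 * π)) :=
  gfun_strictAntiOn fun _ hx =>
    mul_pos (by linarith [hx.1, pi_pos]) (sin_pos_of_mem_Ioo_two_pi_three_pi hx)

lemma gfun_neg_of_mem_Ioc_zero_pi {x : ℝ} (hx : x ∈ Ioc 0 π) : gfun x < 0 := by
  have h := gfun_strictAntiOn_Icc_zero_pi (left_mem_Icc.mpr pi_pos.le) (Ioc_subset_Icc_self hx) hx.1
  simpa [gfun] using h

lemma gfun_eq_zero_iff_eq_tan {x : ℝ} (hx : x ≠ 0) : gfun x = 0 ↔ x = tan x := by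
  rw [gfun, tan_eq_sin_div_cos]
  by_cases hcos : cos x = 0
  · have hsin : sin x ≠ 0 := by
      intro hsin
      have := sin_sq_add_cos_sq x
      simp_all
    simp [hcos, hsin, hx]
  · rw [eq_div_iff hcos, sub_eq_zero]

lemma exists_gfun_eq_zero : ∃ x ∈ Ioo (2 * π) (5 * π / 2), gfun x = 0 := by
  have hleft : gfun (2 * π) = 2 * π := by simp [gfun]
  have hright : gfun (5 * π / 2) = -1 := by
    rw [gfun, show 5 * π / 2 = π / 2 + 2 * π by ring, cos_add_two_pi, sin_add_two_pi,
      cos_pi_div_two, sin_pi_div_two]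
    ring
  refine intermediate_value_Ioo' (by linarith [pi_pos]) continuous_gfun.continuousOn ?_
  rw [hleft, hright]
  constructor <;> linarith [pi_pos]

lemma isLeast_of_gfun_eq_zero {x : ℝ} (hx : x ∈ Ioo (2 * π) (5 * π / 2)) (hgx : gfun x = 0) :
    IsLeast {x : ℝ | 0 < x ∧ x = tan x ∧ 0 < hfun x} x := by
  have hx₀ : 0 < x := by linarith [hx.1, pi_pos]
  have hx3 : x < 3 * π := by linarith [hx.2, pi_pos]
  refine ⟨⟨hx₀, (gfun_eq_zero_iff_eq_tan hx₀.ne').mp hgx, ?_⟩, ?_⟩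
  · exact div_pos (sin_pos_of_mem_Ioo_two_pi_three_pi ⟨hx.1, hx3⟩) hx₀
  rintro y ⟨hy₀, hytan, hhy⟩
  by_contra! hyx
  have hgy : gfun y = 0 := (gfun_eq_zero_iff_eq_tan hy₀.ne').mpr hytan
  have hsin : 0 < sin y := (div_pos_iff_of_pos_right hy₀).mp hhy
  rcases le_or_gt y π with hyπ | hyπ
  · exact (gfun_neg_of_mem_Ioc_zero_pi ⟨hy₀, hyπ⟩).ne hgy
  rcases le_or_gt y (2 * π) with hy2π | hy2π
  · exact (sin_nonpos_of_mem_Icc_pi_two_pi ⟨hyπ.le, hy2π⟩).not_gt hsin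
  · have := gfun_strictAntiOn_Icc_two_pi_three_pi ⟨hy2π.le, by linarith⟩ ⟨hx.1.le, hx3.le⟩ hyx
    linarith

lemma xZero_spec : xZero ∈ Ioo (2 * π) (5 * π / 2) ∧ gfun xZero = 0 := by
  obtain ⟨x, hx, hgx⟩ := exists_gfun_eq_zero
  rw [xZero, (isLeast_of_gfun_eq_zero hx hgx).csInf_eq]
  exact ⟨hx, hgx⟩

lemma hasDerivAt_hfun {x : ℝ} (hx : x ≠ 0) : HasDerivAt hfun (gfun x / x ^ 2) x := by
  have h : HasDerivAt hfun ((cos x * x - sin x * 1) / x ^ 2) x :=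
    (hasDerivAt_sin x).div (hasDerivAt_id x) hx
  convert h using 1
  rw [gfun]
  ring

lemma continuousOn_hfun {s : Set ℝ} (hs : ∀ x ∈ s, x ≠ 0) : ContinuousOn hfun s :=
  fun x hx => (hasDerivAt_hfun (hs x hx)).continuousAt.continuousWithinAt

lemma hfun_strictAntiOn_Ioc_zero_pi : StrictAntiOn hfun (Ioc 0 π) := by
  refine strictAntiOn_of_deriv_neg (convex_Ioc 0 π) (continuousOn_hfun fun x hx => hx.1.ne')
    fun x hx => ?_
  rw [interior_Ioc] at hx
  rw [(hasDerivAt_hfun hx.1.ne').deriv]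
  exact div_neg_of_neg_of_pos (gfun_neg_of_mem_Ioc_zero_pi (Ioo_subset_Ioc_self hx))
    (by positivity [hx.1])

lemma hfun_monotoneOn {a b : ℝ} (ha : 0 < a) (hg : ∀ x ∈ Ioo a b, 0 ≤ gfun x) :
    MonotoneOn hfun (Icc a b) := by
  have hne : ∀ x ∈ Icc a b, x ≠ 0 := fun x hx => (ha.trans_le hx.1).ne'
  refine monotoneOn_of_deriv_nonneg (convex_Icc a b) (continuousOn_hfun hne)
    (fun x hx => (hasDerivAt_hfun (hne x (interior_subset hx))).differentiableAt
      |>.differentiableWithinAt)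
    fun x hx => ?_
  rw [interior_Icc] at hx
  rw [(hasDerivAt_hfun (ha.trans hx.1).ne').deriv]
  exact div_nonneg (hg x hx) (sq_nonneg x)

lemma hfun_antitoneOn {a b : ℝ} (ha : 0 < a) (hg : ∀ x ∈ Ioo a b, gfun x ≤ 0) :
    AntitoneOn hfun (Icc a b) := by
  have hne : ∀ x ∈ Icc a b, x ≠ 0 := fun x hx => (ha.trans_le hx.1).ne'
  refine antitoneOn_of_deriv_nonpos (convex_Icc a b) (continuousOn_hfun hne)
    (fun x hx => (hasDerivAt_hfun (hne x (interior_subset hx))).differentiableAt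
      |>.differentiableWithinAt)
    fun x hx => ?_
  rw [interior_Icc] at hx
  rw [(hasDerivAt_hfun (ha.trans hx.1).ne').deriv]
  exact div_nonpos_of_nonpos_of_nonneg (hg x hx) (sq_nonneg x)

lemma hfun_le_hfun_xZero_of_mem_Icc {y : ℝ} (hy : y ∈ Icc (2 * π) (3 * π)) :
    hfun y ≤ hfun xZero := by
  obtain ⟨⟨hx₁, hx₂⟩, hg⟩ := xZero_spec
  have h2π : 0 < 2 * π := by positivity
  have hx : xZero ∈ Icc (2 * π) (3 * π) := ⟨hx₁.le, by linarith [pi_pos]⟩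
  rcases le_total y xZero with hyx | hxy
  · refine hfun_monotoneOn h2π (fun x hx' => ?_) ⟨hy.1, hyx⟩ ⟨hx₁.le, le_rfl⟩ hyx
    rw [← hg]
    exact (gfun_strictAntiOn_Icc_two_pi_three_pi ⟨hx'.1.le, hx'.2.le.trans hx.2⟩ hx hx'.2).le
  · refine hfun_antitoneOn (h2π.trans hx₁) (fun x hx' => ?_) ⟨le_rfl, hx.2⟩ ⟨hxy, hy.2⟩ hxy
    rw [← hg]
    exact (gfun_strictAntiOn_Icc_two_pi_three_pi hx ⟨hx.1.trans hx'.1.le, hx'.2.le⟩ hx'.1).le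

lemma two_div_five_pi_le_hfun_xZero : 2 / (5 * π) ≤ hfun xZero := by
  have h : hfun (5 * π / 2) = 2 / (5 * π) := by
    rw [hfun, show 5 * π / 2 = π / 2 + 2 * π by ring, sin_add_two_pi, sin_pi_div_two]
    field_simp
    ring
  rw [← h]
  exact hfun_le_hfun_xZero_of_mem_Icc ⟨by linarith [pi_pos], by linarith [pi_pos]⟩

lemma hfun_xZero_pos : 0 < hfun xZero :=
  lt_of_lt_of_le (by positivity) two_div_five_pi_le_hfun_xZero

lemma hfun_xZero_lt_half : hfun xZero < 1 / 2 := by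
  have hx := xZero_spec.1.1
  have hxpos : 0 < xZero := by linarith [pi_pos]
  calc hfun xZero ≤ xZero⁻¹ := hfun_le_inv hxpos
    _ < 2⁻¹ := inv_strictAnti₀ two_pos (by linarith [pi_gt_three])
    _ = 1 / 2 := by norm_num

lemma hfun_le_hfun_xZero_of_pi_le {y : ℝ} (hy : π ≤ y) : hfun y ≤ hfun xZero := by
  have hy₀ : 0 < y := pi_pos.trans_le hy
  rcases le_or_gt y (2 * π) with hy2 | hy2
  · exact (div_nonpos_of_nonpos_of_nonneg (sin_nonpos_of_mem_Icc_pi_two_pi ⟨hy, hy2⟩) hy₀.le).trans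
      hfun_xZero_pos.le
  rcases le_or_gt y (3 * π) with hy3 | hy3
  · exact hfun_le_hfun_xZero_of_mem_Icc ⟨hy2.le, hy3⟩
  calc hfun y ≤ y⁻¹ := hfun_le_inv hy₀
    _ ≤ 2 / (5 * π) := by
      rw [inv_eq_one_div, div_le_div_iff₀ hy₀ (by positivity)]
      linarith [pi_pos]
    _ ≤ hfun xZero := two_div_five_pi_le_hfun_xZero

lemma exists_hfun_eq_of_mem_Icc {c : ℝ} (hc : c ∈ Icc 0 (2 / π)) :
    ∃ x ∈ Icc (π / 2) π, hfun x = c := by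
  have hπ : hfun π = 0 := by simp [hfun]
  have hπ2 : hfun (π / 2) = 2 / π := by
    rw [hfun, sin_pi_div_two]
    field_simp
  refine intermediate_value_Icc' (by linarith [pi_pos])
    (continuousOn_hfun fun x hx => (half_pos pi_pos |>.trans_le hx.1).ne') ?_
  rwa [hπ, hπ2]

/-- if `β₁ < −δ/(β₀(1 − 2h(x₀)))` then
`h(x₀) < (δ + β₀β₁)/(2β₀β₁) < 1/2`, and `h(x) = (δ + β₀β₁)/(2β₀β₁)` has a unique
solution `x_c` among all `x > 0`; moreover `x_c ∈ (0, π)`. -/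
theorem unique_solution_xc
    (δ β₀ β₁ : ℝ) (hδ : 0 < δ) (hβ₀ : 0 < β₀)
    (hβ₁ : β₁ < -δ / (β₀ * (1 - 2 * hfun xZero))) :
    hfun xZero < (δ + β₀ * β₁) / (2 * β₀ * β₁) ∧
    (δ + β₀ * β₁) / (2 * β₀ * β₁) < 1 / 2 ∧
    (∃! x : ℝ, 0 < x ∧ hfun x = (δ + β₀ * β₁) / (2 * β₀ * β₁)) ∧
    (∀ x : ℝ, 0 < x → hfun x = (δ + β₀ * β₁) / (2 * β₀ * β₁) → x < Real.pi) := by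
  set c := (δ + β₀ * β₁) / (2 * β₀ * β₁)
  obtain ⟨hlow, hhigh⟩ := threshold_mem_Ioo hfun_xZero_lt_half hδ hβ₀ hβ₁
  have hlt_pi : ∀ x : ℝ, 0 < x → hfun x = c → x < π := fun x _ hx => by
    by_contra! hπx
    exact (hfun_le_hfun_xZero_of_pi_le hπx).not_gt (hx ▸ hlow)
  have hc2π : c ≤ 2 / π := by
    have : 1 / 2 ≤ 2 / π := by
      rw [div_le_div_iff₀ two_pos pi_pos]
      linarith [pi_lt_four]
    linarith
  obtain ⟨x, hx, hhx⟩ := exists_hfun_eq_of_mem_Icc ⟨hfun_xZero_pos.le.trans hlow.le, hc2π⟩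
  have hx₀ : 0 < x := (half_pos pi_pos).trans_le hx.1
  refine ⟨hlow, hhigh, ⟨x, ⟨hx₀, hhx⟩, fun y ⟨hy₀, hhy⟩ => ?_⟩, hlt_pi⟩
  exact hfun_strictAntiOn_Ioc_zero_pi.injOn ⟨hy₀, (hlt_pi y hy₀ hhy).le⟩ ⟨hx₀, hx.2⟩
    (hhy.trans hhx.symm)
end
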